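/- Let d ≥ 1 and let P be an i.i.d. probability measure on Ω. Suppose f and g are nonnegative functions in L¹(Ω,P) such that for P-almost every ω ∈ Ω, lim_{n→∞} Σ_{x∈ℤ^d} |P_ω^0(X_n = x) − ℙ^0(X_n = x) · f(σ_x ω)| = 0 and lim_{n→∞} Σ_{x∈ℤ^d} |P_ω^0(X_n = x) − ℙ^0(X_n = x) · g(σ_x ω)| = 0. Then f = g P-almost surely. -/

import Mathlib

open MeasureTheory Filter
open scoped ENNReal

noncomputable section

namespace RWRE

/-- sites of the lattice `ℤ^d`. -/
abbrev Site (d : ℕ) := Fin d → ℤ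

/-- index set for the `2d` nearest-neighbour steps: `(i, true) ↦ e_i`, `(i, false) ↦ -e_i`. -/
abbrev StepIdx (d : ℕ) := Fin d × Bool

/-- the signed unit vector corresponding to a step index. -/
def stepVec {d : ℕ} (s : StepIdx d) : Site d :=
  fun j => if j = s.1 then (if s.2 then 1 else -1) else 0

/-- probability vectors on the `2d` nearest-neighbour steps. -/
abbrev EnvAt (d : ℕ) := {p : StepIdx d → ℝ // (∀ s, 0 ≤ p s) ∧ ∑ s, p s = 1}

/-- the space of environments `Ω = (M_d)^{ℤ^d}`. -/
abbrev Env (d : ℕ) := Site d → EnvAt d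

/-- the space of trajectories. -/
abbrev Path (d : ℕ) := ℕ → Site d

/-- the shift of the environment by `x`. -/
def shift {d : ℕ} (x : Site d) (ω : Env d) : Env d := fun y => ω (x + y)

/-- transition probability in environment `ω` from site `y` by increment `v`. -/
def envP {d : ℕ} (ω : Env d) (y v : Site d) : ℝ≥0∞ :=
  ∑ s : StepIdx d, if v = stepVec s then ENNReal.ofReal ((ω y).1 s) else 0

/-- `μ` is the quenched law of the walk started at `x` in the environment `ω`: a
probability measure on path space whose cylinder probabilities are the products of
the transition probabilities of `ω`. -/
def IsQuenched {d : ℕ} (ω : Env d) (x : Site d) (μ : Measure (Path d)) : Prop :=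
  IsProbabilityMeasure μ ∧
    ∀ (n : ℕ) (γ : ℕ → Site d),
      μ {f | ∀ i ≤ n, f i = γ i} =
        (if γ 0 = x then 1 else 0) *
          ∏ i ∈ Finset.range n, envP ω (γ i) (γ (i + 1) - γ i)

/-- `Pq` is a measurable family of quenched laws. -/
def IsQuenchedFamily {d : ℕ} (Pq : Env d → Site d → Measure (Path d)) : Prop :=
  (∀ ω x, IsQuenched ω x (Pq ω x)) ∧
    ∀ (x : Site d) (A : Set (Path d)), MeasurableSet A →
      Measurable fun ω => Pq ω x A

/-- the annealed probability `ℙ^x(A) = ∫ P_ω^x(A) dP(ω)` of a path event. -/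
def ann {d : ℕ} (P : Measure (Env d)) (Pq : Env d → Site d → Measure (Path d))
    (x : Site d) (A : Set (Path d)) : ℝ≥0∞ :=
  ∫⁻ ω, Pq ω x A ∂P

/-- the annealed expectation `𝔼^x[g]` of a real path functional. -/
def annE {d : ℕ} (P : Measure (Env d)) (Pq : Env d → Site d → Measure (Path d))
    (x : Site d) (g : Path d → ℝ) : ℝ :=
  ∫ ω, (∫ f, g f ∂(Pq ω x)) ∂P

/-- `P` is an i.i.d. measure on the space of environments: its finite-dimensional
marginals are products of a fixed single-site probability measure. -/
def IsIID {d : ℕ} (P : Measure (Env d)) : Prop :=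
  ∃ ν : Measure (EnvAt d), IsProbabilityMeasure ν ∧
    ∀ (s : Finset (Site d)) (B : Site d → Set (EnvAt d)),
      (∀ x, MeasurableSet (B x)) →
        P {ω | ∀ x ∈ s, ω x ∈ B x} = ∏ x ∈ s, ν (B x)

/-- uniform ellipticity of `P`. -/
def UniformlyElliptic {d : ℕ} (P : Measure (Env d)) : Prop :=
  ∃ η : ℝ, 0 < η ∧ ∀ s : StepIdx d, P {ω : Env d | (ω 0).1 s < η} = 0

/-- a lattice point, viewed as a real vector. -/
def toR {d : ℕ} (x : Site d) : Fin d → ℝ := fun i => (x i : ℝ)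

/-- inner product of a lattice point with a real direction. -/
def dotR {d : ℕ} (x : Site d) (ℓ : Fin d → ℝ) : ℝ := ∑ i, (x i : ℝ) * ℓ i

/-- the euclidean norm of a real vector. -/
def norm2R {d : ℕ} (ℓ : Fin d → ℝ) : ℝ := Real.sqrt (∑ i, ℓ i ^ 2)

/-- the event `{T_L^{(-ℓ)} < T_L^{(ℓ)}}` that the walk reaches level `L` in
direction `-ℓ` strictly before reaching level `L` in direction `ℓ`. -/
def backtrackEvent {d : ℕ} (ℓ : Fin d → ℝ) (L : ℝ) : Set (Path d) :=
  {f | ∃ n, L ≤ dotR (f n) (-ℓ) ∧ ∀ m ≤ n, dotR (f m) ℓ < L}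

/-- condition `(T_γ)` in the direction `ℓ₀`. -/
def CondTAt {d : ℕ} (P : Measure (Env d)) (Pq : Env d → Site d → Measure (Path d))
    (γ : ℝ) (ℓ₀ : Fin d → ℝ) : Prop :=
  ∃ ε : ℝ, 0 < ε ∧ ∀ ℓ : Fin d → ℝ, norm2R ℓ = 1 → norm2R (ℓ - ℓ₀) < ε →
    ∃ C : ℝ, ∀ L : ℝ, 0 < L →
      ann P Pq 0 (backtrackEvent ℓ L) ≤ ENNReal.ofReal (C * Real.exp (-(L ^ γ)))

/-- condition `(T_γ)` in some direction. -/
def CondT {d : ℕ} (P : Measure (Env d)) (Pq : Env d → Site d → Measure (Path d))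
    (γ : ℝ) : Prop :=
  ∃ ℓ₀ : Fin d → ℝ, norm2R ℓ₀ = 1 ∧ CondTAt P Pq γ ℓ₀

/-- condition `(𝒫)`: condition `(T_γ)` holds for some `γ ∈ (0,1)` in some direction. -/
def CondP {d : ℕ} (P : Measure (Env d)) (Pq : Env d → Site d → Measure (Path d)) : Prop :=
  ∃ γ : ℝ, 0 < γ ∧ γ < 1 ∧ CondT P Pq γ

/-- condition `(𝒫)` in a given direction. -/
def CondPAt {d : ℕ} (P : Measure (Env d)) (Pq : Env d → Site d → Measure (Path d))
    (ℓ₀ : Fin d → ℝ) : Prop :=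
  ∃ γ : ℝ, 0 < γ ∧ γ < 1 ∧ CondTAt P Pq γ ℓ₀

/-- `Q` is invariant with respect to the point of view of the particle. -/
def InvariantPOV {d : ℕ} (Q : Measure (Env d)) : Prop :=
  ∀ g : Env d → ℝ, Measurable g → (∃ C : ℝ, ∀ ω, |g ω| ≤ C) →
    ∫ ω, (∑ s : StepIdx d, (ω 0).1 s * g (shift (stepVec s) ω)) ∂Q = ∫ ω, g ω ∂Q

/-- superpolynomial decay: `g N = N^{-ξ(1)}`. -/
def Superpoly (g : ℕ → ℝ) : Prop :=
  ∀ k : ℕ, Tendsto (fun N : ℕ => (N : ℝ) ^ k * g N) atTop (nhds 0)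

/-- the first coordinate `⟨x, e₁⟩` of a lattice point. -/
def firstCoord {d : ℕ} (x : Fin d → ℤ) : ℤ := if h : 0 < d then x ⟨0, h⟩ else 0

/-- the first coordinate `⟨ℓ, e₁⟩` of a real vector. -/
def firstCoordR {d : ℕ} (ℓ : Fin d → ℝ) : ℝ := if h : 0 < d then ℓ ⟨0, h⟩ else 0

/-- the first standard basis vector, as a real direction. -/
def e1R (d : ℕ) : Fin d → ℝ := fun i => if (i : ℕ) = 0 then 1 else 0

/-- `R_k(N) = ⌊exp((log log N)^{k+1})⌋`. -/
def Rk (k N : ℕ) : ℕ := ⌊Real.exp (Real.log (Real.log (N : ℝ)) ^ (k + 1))⌋₊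

/-- the `ℓ¹`-norm of a lattice point. -/
def norm1 {d : ℕ} (x : Site d) : ℤ := ∑ i, |x i|

/-- the parallelogram `𝒫(z,N)` (relative to the asymptotic direction `ϑ`). -/
def para {d : ℕ} (ϑ : Fin d → ℝ) (z : Site d) (N : ℕ) : Set (Site d) :=
  {x | |firstCoord (x - z)| < (N : ℤ) ^ 2 ∧
    ∀ i, |((x - z) i : ℝ) - (firstCoord (x - z) : ℝ) / firstCoordR ϑ * ϑ i|
      < (N : ℝ) * (Rk 5 N : ℝ)}

/-- the middle third `𝒫̃(z,N)` of the parallelogram. -/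
def paraMid {d : ℕ} (ϑ : Fin d → ℝ) (z : Site d) (N : ℕ) : Set (Site d) :=
  {x | 3 * |firstCoord (x - z)| < (N : ℤ) ^ 2 ∧
    ∀ i, 3 * |((x - z) i : ℝ) - (firstCoord (x - z) : ℝ) / firstCoordR ϑ * ϑ i|
      < (N : ℝ) * (Rk 5 N : ℝ)}

/-- the boundary `∂𝒫(z,N)`. -/
def paraBdry {d : ℕ} (ϑ : Fin d → ℝ) (z : Site d) (N : ℕ) : Set (Site d) :=
  {x | x ∉ para ϑ z N ∧ ∃ y ∈ para ϑ z N, norm1 (x - y) = 1}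

/-- the right boundary `∂⁺𝒫(z,N)`. -/
def paraBdryPlus {d : ℕ} (ϑ : Fin d → ℝ) (z : Site d) (N : ℕ) : Set (Site d) :=
  {x | x ∈ paraBdry ϑ z N ∧ firstCoord (x - z) = (N : ℤ) ^ 2}

/-- the walk hits the set `A`. -/
def hits {d : ℕ} (A : Set (Site d)) (f : Path d) : Prop := ∃ n, f n ∈ A

/-- the hitting time `T_A` of a set of sites. -/
def hitTime {d : ℕ} (A : Set (Site d)) (f : Path d) : ℕ := sInf {n | f n ∈ A}

/-- the hyperplane `H_M = {x : ⟨x,e₁⟩ = M}`. -/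
def hyper {d : ℕ} (M : ℤ) : Set (Site d) := {x | firstCoord x = M}

/-- the event that the walk hits `A`, at a time belonging to `I`, and in a point of `Δ`. -/
def exitEvent {d : ℕ} (A Δ : Set (Site d)) (I : Set ℕ) : Set (Path d) :=
  {f | hits A f ∧ f (hitTime A f) ∈ Δ ∧ hitTime A f ∈ I}

/-- the `d`-dimensional cube with corner `a` and side length `L`. -/
def cube {d : ℕ} (a : Site d) (L : ℕ) : Set (Site d) :=
  {x | ∀ i, a i ≤ x i ∧ x i < a i + (L : ℤ)}

/-- the same cube, as a finite set. -/
def cubeF {d : ℕ} (a : Site d) (L : ℕ) : Finset (Site d) :=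
  Fintype.piFinset fun i => Finset.Ico (a i) (a i + (L : ℤ))

/-- a `(d-1)`-dimensional cube of side length `L` inside the hyperplane `H_m`. -/
def cubeHyp {d : ℕ} (m : ℤ) (a : Site d) (L : ℕ) : Set (Site d) :=
  {x | firstCoord x = m ∧ ∀ i : Fin d, (i : ℕ) ≠ 0 → a i ≤ x i ∧ x i < a i + (L : ℤ)}

/-- the time interval `[t, t + L)`. -/
def interval (t L : ℕ) : Set ℕ := {n | t ≤ n ∧ n < t + L}

/-- `S` is the set of corners of a partition of `ℤ^d` into cubes of side length `L`. -/
def IsCubePartition {d : ℕ} (L : ℕ) (S : Set (Site d)) : Prop :=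
  (∀ x : Site d, ∃ a ∈ S, x ∈ cube a L) ∧
    ∀ a ∈ S, ∀ b ∈ S, a ≠ b → Disjoint (cube a L) (cube b L)

/-- `t` is a regeneration time of the path `f` in direction `e₁`. -/
def IsRegen {d : ℕ} (f : Path d) (t : ℕ) : Prop :=
  (∀ s < t, firstCoord (f s) < firstCoord (f t)) ∧
    firstCoord (f t) < firstCoord (f (t + 1)) ∧
    ∀ s, t + 1 < s → firstCoord (f (t + 1)) < firstCoord (f s)

/-- the `k`-th regeneration time `τ_k` (with the convention `τ₀ = 0`). -/
def regTime {d : ℕ} (f : Path d) : ℕ → ℕ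
  | 0 => 0
  | k + 1 => sInf {t | regTime f k < t ∧ IsRegen f t}

/-- the event `B_N` that each of the first `N²` regeneration gaps is at most `R(N)`. -/
def BN {d : ℕ} (N : ℕ) : Set (Path d) :=
  {f | ∀ k, 1 ≤ k → k ≤ N ^ 2 → regTime f k - regTime f (k - 1) ≤ Rk 1 N}

/-- `ϑ` is the asymptotic direction `lim Xₙ/‖Xₙ‖₂` of the walk, annealed a.s. -/
def DirSpeed {d : ℕ} (P : Measure (Env d)) (Pq : Env d → Site d → Measure (Path d))
    (ϑ : Fin d → ℝ) : Prop :=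
  ann P Pq 0 {f | ¬ Tendsto (fun n => fun i => toR (f n) i / norm2R (toR (f n)))
    atTop (nhds ϑ)} = 0

/-- the σ-algebra generated by the environment in the half space `⟨z,e₁⟩ ≤ m`. -/
def sigmaUpTo (d : ℕ) (m : ℤ) : MeasurableSpace (Env d) :=
  MeasurableSpace.comap
    (fun ω => (fun z : {z : Site d // firstCoord z ≤ m} => ω z.1)) inferInstance

/-! Subtracting the two local limits, the averages
`∑ₓ ℙ⁰(Xₙ = x) · min(|f - g|, 1)(σₓ ω)` tend to `0` for `P`-a.e. `ω`. The annealed weights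
`ℙ⁰(Xₙ = x)` form a probability vector on the finite box `[-n, n]^d` and the i.i.d. measure is
invariant under every shift, so each average has expectation `E[min(|f - g|, 1)]`. Bounded
convergence forces this expectation to vanish, hence `f = g` a.s. -/

open Finset Topology

section Averaging

variable {Ω ι : Type*} [MeasurableSpace Ω] {P : Measure Ω}

lemma sum_mul_abs_sub_le (s : Finset ι) {a : ι → ℝ} (ha : ∀ i, 0 ≤ a i) (q u v : ι → ℝ) :
    ∑ i ∈ s, a i * |u i - v i| ≤ ∑ i ∈ s, |q i - a i * u i| + ∑ i ∈ s, |q i - a i * v i| := by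
  rw [← sum_add_distrib]
  gcongr with i
  calc a i * |u i - v i| = |(q i - a i * v i) - (q i - a i * u i)| := by
        rw [show (q i - a i * v i) - (q i - a i * u i) = a i * (u i - v i) by ring, abs_mul,
          abs_of_nonneg (ha i)]
    _ ≤ |q i - a i * v i| + |q i - a i * u i| := abs_sub _ _
    _ = |q i - a i * u i| + |q i - a i * v i| := add_comm _ _

lemma integral_sum_mul_comp_of_measurePreserving [IsFiniteMeasure P] {τ : ι → Ω → Ω}
    (hτ : ∀ i, MeasurePreserving (τ i) P P) (s : Finset ι) {a : ι → ℝ}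
    (ha : ∑ i ∈ s, a i = 1) {φ : Ω → ℝ} (hφi : Integrable φ P) :
    ∫ ω, ∑ i ∈ s, a i * φ (τ i ω) ∂P = ∫ ω, φ ω ∂P := by
  have hcomp : ∀ i, ∫ ω, φ (τ i ω) ∂P = ∫ ω, φ ω ∂P := fun i => by
    rw [← integral_map (hτ i).aemeasurable (by rw [(hτ i).map_eq]; exact hφi.1), (hτ i).map_eq]
  refine (integral_finsetSum _ fun i _ => ?_).trans ?_
  · exact ((hτ i).integrable_comp_of_integrable hφi).const_mul _
  simp only [integral_const_mul, hcomp, ← sum_mul, ha, one_mul]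

theorem ae_eq_zero_of_tendsto_sum_mul_comp [IsFiniteMeasure P] {τ : ι → Ω → Ω}
    (hτ : ∀ i, MeasurePreserving (τ i) P P) {s : ℕ → Finset ι} {a : ℕ → ι → ℝ}
    (ha0 : ∀ n i, 0 ≤ a n i) (ha1 : ∀ n, ∑ i ∈ s n, a n i = 1) {φ : Ω → ℝ} {C : ℝ}
    (hφm : Measurable φ) (hφ0 : 0 ≤ φ) (hφC : ∀ ω, φ ω ≤ C)
    (hlim : ∀ᵐ ω ∂P, Tendsto (fun n => ∑ i ∈ s n, a n i * φ (τ i ω)) atTop (𝓝 0)) :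
    φ =ᵐ[P] 0 := by
  have hφi : Integrable φ P := Integrable.of_bound hφm.aestronglyMeasurable C
    (ae_of_all _ fun ω => by rw [Real.norm_of_nonneg (hφ0 ω)]; exact hφC ω)
  have hbound : ∀ n ω, ‖∑ i ∈ s n, a n i * φ (τ i ω)‖ ≤ C := fun n ω => by
    rw [Real.norm_of_nonneg (sum_nonneg fun i _ => mul_nonneg (ha0 n i) (hφ0 _))]
    calc ∑ i ∈ s n, a n i * φ (τ i ω) ≤ ∑ i ∈ s n, a n i * C :=
          sum_le_sum fun i _ => mul_le_mul_of_nonneg_left (hφC _) (ha0 n i)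
      _ = C := by rw [← sum_mul, ha1 n, one_mul]
  have hmeas : ∀ n, Measurable fun ω => ∑ i ∈ s n, a n i * φ (τ i ω) := fun n =>
    Finset.measurable_sum _ fun i _ => measurable_const.mul (hφm.comp (hτ i).measurable)
  have hint : Tendsto (fun n => ∫ ω, ∑ i ∈ s n, a n i * φ (τ i ω) ∂P) atTop (𝓝 0) := by
    simpa using tendsto_integral_of_dominated_convergence (fun _ => C)
      (fun n => (hmeas n).aestronglyMeasurable) (integrable_const C)
      (fun n => ae_of_all _ (hbound n)) hlim
  simp only [integral_sum_mul_comp_of_measurePreserving hτ _ (ha1 _) hφi] at hint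
  exact (integral_eq_zero_iff_of_nonneg hφ0 hφi).mp (tendsto_nhds_unique tendsto_const_nhds hint)

end Averaging

variable {d : ℕ}

lemma measurable_shift (x : Site d) : Measurable (shift (d := d) x) :=
  measurable_pi_lambda _ fun y => measurable_pi_apply (x + y)

lemma IsIID.measurePreserving_shift {P : Measure (Env d)} [IsFiniteMeasure P] (hIID : IsIID P)
    (x : Site d) : MeasurePreserving (shift x) P P := by
  refine ⟨measurable_shift x, ?_⟩
  obtain ⟨ν, -, hmarg⟩ := hIID
  refine ext_of_generate_finite _ generateFrom_squareCylinders.symm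
    (isPiSystem_squareCylinders (fun _ => MeasurableSpace.isPiSystem_measurableSet)
      fun _ => by simp) ?_
    (by rw [Measure.map_apply (measurable_shift x) .univ, Set.preimage_univ])
  rintro _ ⟨s, (B : Site d → Set (EnvAt d)), hB, rfl⟩
  simp only [Set.mem_pi, Set.mem_univ, Set.mem_ofPred_eq, true_implies] at hB
  have hpre : shift x ⁻¹' (s : Set (Site d)).pi B =
      {ω | ∀ z ∈ s.map (addLeftEmbedding x), ω z ∈ B (z - x)} := by
    ext ω
    simp only [Set.mem_preimage, Set.mem_pi, Finset.mem_coe, shift, Set.mem_ofPred_eq,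
      Finset.mem_map, addLeftEmbedding_apply, forall_exists_index, and_imp,
      forall_apply_eq_imp_iff₂, add_sub_cancel_left]
  rw [Measure.map_apply (measurable_shift x) (.pi s.countable_toSet fun y _ => hB y), hpre,
    hmarg _ _ fun z => hB (z - x), prod_map]
  simp only [addLeftEmbedding_apply, add_sub_cancel_left]
  exact (hmarg s B hB).symm

lemma measurableSet_eval_eq (n : ℕ) (y : Site d) : MeasurableSet {p : Path d | p n = y} :=
  (measurableSet_singleton y).preimage (measurable_pi_apply n)

lemma exists_eq_stepVec_of_envP_ne_zero {ω : Env d} {y v : Site d} (h : envP ω y v ≠ 0) :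
    ∃ s, v = stepVec s := by
  by_contra! hv
  exact h (sum_eq_zero fun s _ => if_neg (hv s))

lemma abs_stepVec_apply_le_one (s : StepIdx d) (j : Fin d) : |stepVec s j| ≤ 1 := by
  unfold stepVec
  split_ifs <;> simp

lemma abs_sub_le_of_prod_envP_ne_zero {ω : Env d} {γ : ℕ → Site d} {n : ℕ}
    (h : ∏ i ∈ range n, envP ω (γ i) (γ (i + 1) - γ i) ≠ 0) (j : Fin d) :
    |γ n j - γ 0 j| ≤ n := by
  induction n with
  | zero => simp
  | succ n ih =>
    rw [prod_range_succ] at h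
    obtain ⟨s, hs⟩ := exists_eq_stepVec_of_envP_ne_zero (right_ne_zero_of_mul h)
    have hstep : |γ (n + 1) j - γ n j| ≤ 1 := by
      simpa [← hs] using abs_stepVec_apply_le_one s j
    calc |γ (n + 1) j - γ 0 j| ≤ |γ (n + 1) j - γ n j| + |γ n j - γ 0 j| := abs_sub_le _ _ _
      _ ≤ 1 + n := add_le_add hstep (ih (left_ne_zero_of_mul h))
      _ = (n + 1 : ℕ) := by push_cast; ring

def box (x : Site d) (n : ℕ) : Finset (Site d) :=
  Fintype.piFinset fun j => Icc (x j - n) (x j + n)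

lemma mem_box {x y : Site d} {n : ℕ} : y ∈ box x n ↔ ∀ j, |y j - x j| ≤ n := by
  simp only [box, Fintype.mem_piFinset, mem_Icc, abs_sub_le_iff]
  exact forall_congr' fun j => by omega

lemma IsQuenched.measure_cylinder_eq_zero {ω : Env d} {x : Site d} {μ : Measure (Path d)}
    (hμ : IsQuenched ω x μ) {γ : ℕ → Site d} {n : ℕ} {j : Fin d} (hγ : (n : ℤ) < |γ n j - x j|) :
    μ {f | ∀ i ≤ n, f i = γ i} = 0 := by
  rw [hμ.2 n γ]
  split_ifs with h0
  · rw [one_mul]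
    by_contra h
    exact (abs_sub_le_of_prod_envP_ne_zero h j).not_gt (h0 ▸ hγ)
  · rw [zero_mul]

lemma IsQuenched.measure_eval_eq_zero_of_notMem_box {ω : Env d} {x : Site d}
    {μ : Measure (Path d)} (hμ : IsQuenched ω x μ) {n : ℕ} {y : Site d} (hy : y ∉ box x n) :
    μ {p | p n = y} = 0 := by
  obtain ⟨j, hj⟩ : ∃ j, (n : ℤ) < |y j - x j| := by simpa [mem_box] using hy
  let γ : (Fin n → Site d) → ℕ → Site d := fun v i => if h : i < n then v ⟨i, h⟩ else y
  have hcover : {p : Path d | p n = y} ⊆ ⋃ v, {f | ∀ i ≤ n, f i = γ v i} := fun p hp =>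
    Set.mem_iUnion.2 ⟨fun i => p i, fun i hi => by
      by_cases hin : i < n
      · simp [γ, hin]
      · simpa [γ, hin, show i = n by omega] using hp⟩
  refine measure_mono_null hcover (measure_iUnion_null fun v => ?_)
  exact hμ.measure_cylinder_eq_zero (j := j) (by simpa [γ] using hj)

lemma IsQuenched.sum_box_measure_eval_eq_one {ω : Env d} {x : Site d} {μ : Measure (Path d)}
    (hμ : IsQuenched ω x μ) (n : ℕ) : ∑ y ∈ box x n, μ {p | p n = y} = 1 := by
  have := hμ.1
  calc ∑ y ∈ box x n, μ {p | p n = y} = ∑' y, μ {p | p n = y} :=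
        (tsum_eq_sum fun y hy => hμ.measure_eval_eq_zero_of_notMem_box hy).symm
    _ = μ (⋃ y, (fun p : Path d => p n) ⁻¹' {y}) :=
        (measure_iUnion (μ := μ) (pairwise_disjoint_fiber fun p : Path d => p n)
          fun y => measurableSet_eval_eq n y).symm
    _ = 1 := by
      rw [← Set.preimage_iUnion, Set.iUnion_of_singleton, Set.preimage_univ, measure_univ]

section Annealed

variable {P : Measure (Env d)} {Pq : Env d → Site d → Measure (Path d)} {x : Site d}

lemma ann_eval_eq_zero_of_notMem_box (hPq : ∀ ω, IsQuenched ω x (Pq ω x)) {n : ℕ} {y : Site d}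
    (hy : y ∉ box x n) : ann P Pq x {p | p n = y} = 0 := by
  simp [ann, (hPq _).measure_eval_eq_zero_of_notMem_box hy]

lemma sum_box_toReal_ann_eval_eq_one [IsProbabilityMeasure P] (hPq : IsQuenchedFamily Pq)
    (n : ℕ) : ∑ y ∈ box x n, (ann P Pq x {p | p n = y}).toReal = 1 := by
  have hsum : ∑ y ∈ box x n, ann P Pq x {p | p n = y} = 1 := by
    simp only [ann]
    rw [← lintegral_finsetSum _ fun y _ => hPq.2 x _ (measurableSet_eval_eq n y)]
    simp [(hPq.1 _ x).sum_box_measure_eval_eq_one n]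
  rw [← ENNReal.toReal_sum (ENNReal.sum_ne_top.1 (hsum ▸ ENNReal.one_ne_top)), hsum,
    ENNReal.toReal_one]

lemma tsum_abs_quenched_sub_eq_sum_box (hPq : ∀ ω, IsQuenched ω x (Pq ω x)) (ω : Env d)
    (h : Site d → ℝ) (n : ℕ) :
    ∑' y, |(Pq ω x {p | p n = y}).toReal - (ann P Pq x {p | p n = y}).toReal * h y| =
      ∑ y ∈ box x n, |(Pq ω x {p | p n = y}).toReal - (ann P Pq x {p | p n = y}).toReal * h y| :=
  tsum_eq_sum fun y hy => by
    simp [(hPq ω).measure_eval_eq_zero_of_notMem_box hy, ann_eval_eq_zero_of_notMem_box hPq hy]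

end Annealed

theorem statement16_general (d : ℕ)
    (P : Measure (Env d)) [IsProbabilityMeasure P]
    (Pq : Env d → Site d → Measure (Path d)) (hPq : IsQuenchedFamily Pq)
    (hIID : IsIID P)
    (f g : Env d → ℝ)
    (hfm : Measurable f) (hgm : Measurable g)
    (hf : ∀ᵐ ω ∂P, Tendsto (fun n : ℕ => ∑' x : Site d,
      |(Pq ω 0 {p : Path d | p n = x}).toReal -
        (ann P Pq 0 {p : Path d | p n = x}).toReal * f (shift x ω)|)
      atTop (nhds 0))
    (hg : ∀ᵐ ω ∂P, Tendsto (fun n : ℕ => ∑' x : Site d,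
      |(Pq ω 0 {p : Path d | p n = x}).toReal -
        (ann P Pq 0 {p : Path d | p n = x}).toReal * g (shift x ω)|)
      atTop (nhds 0)) :
    f =ᵐ[P] g := by
  set a : ℕ → Site d → ℝ := fun n x => (ann P Pq 0 {p : Path d | p n = x}).toReal
  have hlim : ∀ᵐ ω ∂P, Tendsto (fun n => ∑ x ∈ box 0 n,
      a n x * min |f (shift x ω) - g (shift x ω)| 1) atTop (𝓝 0) := by
    filter_upwards [hf, hg] with ω hfω hgω
    simp only [tsum_abs_quenched_sub_eq_sum_box (hPq.1 · 0) ω] at hfω hgω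
    refine squeeze_zero (fun n => sum_nonneg fun x _ => by positivity) (fun n => ?_)
      (by simpa using hfω.add hgω)
    calc ∑ x ∈ box 0 n, a n x * min |f (shift x ω) - g (shift x ω)| 1
        ≤ ∑ x ∈ box 0 n, a n x * |f (shift x ω) - g (shift x ω)| := by
          gcongr with x; exact min_le_left _ _
      _ ≤ _ := sum_mul_abs_sub_le _ (fun x => ENNReal.toReal_nonneg) _ _ _
  have hmin := ae_eq_zero_of_tendsto_sum_mul_comp hIID.measurePreserving_shift
    (fun n x => ENNReal.toReal_nonneg) (sum_box_toReal_ann_eval_eq_one hPq)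
    ((hfm.sub hgm).abs.min measurable_const) (fun ω => by positivity) (fun ω => min_le_right _ 1)
    hlim
  filter_upwards [hmin] with ω hω
  obtain ⟨hfg, -⟩ := (min_eq_iff.mp hω).resolve_right fun h => one_ne_zero h.1
  exact sub_eq_zero.mp (abs_eq_zero.mp hfg)

/-- Uniqueness of the prefactor in the local limit theorem. -/
theorem statement16 (d : ℕ) (hd : 1 ≤ d)
    (P : Measure (Env d)) [IsProbabilityMeasure P]
    (Pq : Env d → Site d → Measure (Path d)) (hPq : IsQuenchedFamily Pq)
    (hIID : IsIID P)
    (f g : Env d → ℝ)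
    (hfm : Measurable f) (hf0 : ∀ ω, 0 ≤ f ω) (hfi : Integrable f P)
    (hgm : Measurable g) (hg0 : ∀ ω, 0 ≤ g ω) (hgi : Integrable g P)
    (hf : ∀ᵐ ω ∂P, Tendsto (fun n : ℕ => ∑' x : Site d,
      |(Pq ω 0 {p : Path d | p n = x}).toReal -
        (ann P Pq 0 {p : Path d | p n = x}).toReal * f (shift x ω)|)
      atTop (nhds 0))
    (hg : ∀ᵐ ω ∂P, Tendsto (fun n : ℕ => ∑' x : Site d,
      |(Pq ω 0 {p : Path d | p n = x}).toReal -
        (ann P Pq 0 {p : Path d | p n = x}).toReal * g (shift x ω)|)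
      atTop (nhds 0)) :
    f =ᵐ[P] g :=
  statement16_general d P Pq hPq hIID f g hfm hgm hf hg

end RWRE
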